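/- arXiv:1812.04612 — 4 statements merged into one kernel-verified Lean document; each statement's English description precedes it below -/
import Mathlib

section
/- Let (r_n) be a sequence with 0 < r_n < 1 and (p_n) a probability sequence with p_n > 0 such that s = lim_{n→∞} (log p_n)/(log r_n) exists and is finite. If ∑_{n} p_n (−log p_n) = ∞ (infinite entropy), then s ≤ s_∞, where s_∞ = inf { t ≥ 0 : ∑_n r_n^t < ∞ }. Consequently, combined with the reverse inequality, s = s_∞. -/
/-!
Write `ρₙ = log pₙ / log rₙ`, so that `pₙ = rₙ ^ ρₙ` and `ρₙ → s`. For `t > s` eventually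
`rₙ ^ t ≤ pₙ`, so `∑ rₙ ^ t < ∞`. Conversely, if `∑ rₙ ^ t < ∞` for some `t < s`, pick
`t < t' < s`: eventually `pₙ ≤ rₙ ^ t'` and `-log pₙ ≤ (s + 1) (-log rₙ)`, and since
`x ^ ε (-log x)` is bounded on `(0, 1)`, the entropy terms `pₙ (-log pₙ)` are `O(rₙ ^ t)`,
contradicting infinite entropy.
-/

open Filter Real

lemma rpow_mul_neg_log_le {x ε : ℝ} (hx : 0 < x) (hε : 0 < ε) : x ^ ε * -log x ≤ 1 / ε := by
  have h := log_le_rpow_div (inv_nonneg.2 hx.le) hε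
  rw [log_inv, inv_rpow hx.le] at h
  have hxε : 0 < x ^ ε := rpow_pos_of_pos hx ε
  calc x ^ ε * -log x ≤ x ^ ε * ((x ^ ε)⁻¹ / ε) := mul_le_mul_of_nonneg_left h hxε.le
    _ = 1 / ε := by field_simp

section LogRatio

variable {x y t : ℝ} (hx0 : 0 < x) (hx1 : x < 1) (hy : 0 < y)
include hx0 hx1 hy

lemma rpow_le_iff_log_div_log_le : x ^ t ≤ y ↔ log y / log x ≤ t := by
  rw [rpow_le_iff_le_log hx0 hy, div_le_iff_of_neg (log_neg hx0 hx1)]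

lemma le_rpow_iff_le_log_div_log : y ≤ x ^ t ↔ t ≤ log y / log x := by
  rw [le_rpow_iff_log_le hy hx0, le_div_iff_of_neg (log_neg hx0 hx1)]

lemma mul_neg_log_le_of_le_log_div_log {t' u : ℝ} (ht : 0 ≤ t) (htt' : t < t')
    (hlo : t' ≤ log y / log x) (hhi : log y / log x ≤ u) :
    y * -log y ≤ u / (t' - t) * x ^ t := by
  have hlogx : log x < 0 := log_neg hx0 hx1
  have hlogy : -log y = log y / log x * -log x := by rw [mul_neg, div_mul_cancel₀ _ hlogx.ne]
  have hyx : y ≤ x ^ t' := (le_rpow_iff_le_log_div_log hx0 hx1 hy).2 hlo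
  have hu : 0 ≤ u := by linarith
  calc y * -log y = y * (log y / log x) * -log x := by rw [hlogy]; ring
    _ ≤ x ^ t' * u * -log x := by
        have : y * (log y / log x) ≤ x ^ t' * u :=
          mul_le_mul hyx hhi (by linarith) (rpow_nonneg hx0.le _)
        exact mul_le_mul_of_nonneg_right this (by linarith)
    _ = u * x ^ t * (x ^ (t' - t) * -log x) := by
        rw [show x ^ t' = x ^ t * x ^ (t' - t) by rw [← rpow_add hx0]; ring_nf]; ring
    _ ≤ u * x ^ t * (1 / (t' - t)) := by
        gcongr
        exact rpow_mul_neg_log_le hx0 (by linarith)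
    _ = u / (t' - t) * x ^ t := by ring

end LogRatio

section DecayRatio

variable {r p : ℕ → ℝ} {s t : ℝ} (hr : ∀ n, 0 < r n) (hr1 : ∀ n, r n < 1) (hp : ∀ n, 0 < p n)
  (hlim : Tendsto (fun n => log (p n) / log (r n)) atTop (nhds s))
include hr hr1 hp hlim

lemma summable_rpow_of_decayRatio_lt (hps : Summable p) (hst : s < t) :
    Summable fun n => r n ^ t := by
  refine hps.of_norm_bounded_eventually_nat ?_
  filter_upwards [hlim.eventually_lt_const hst] with n hn
  rw [norm_of_nonneg (rpow_nonneg (hr n).le t)]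
  exact (rpow_le_iff_log_div_log_le (hr n) (hr1 n) (hp n)).2 hn.le

lemma decayRatio_le_of_summable_rpow (hent : ¬ Summable fun n => p n * -log (p n))
    (ht : 0 ≤ t) (hsum : Summable fun n => r n ^ t) : s ≤ t := by
  by_contra! hts
  obtain ⟨t', htt', ht's⟩ := exists_between hts
  refine hent ((hsum.mul_left ((s + 1) / (t' - t))).of_norm_bounded_eventually_nat ?_)
  filter_upwards [hlim.eventually_const_lt ht's, hlim.eventually_lt_const (lt_add_one s)]
    with n hlo hhi
  have hp1 : p n ≤ 1 := ((le_rpow_iff_le_log_div_log (hr n) (hr1 n) (hp n)).2 hlo.le).trans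
    (rpow_le_one (hr n).le (hr1 n).le (by linarith))
  have hent_nonneg : 0 ≤ p n * -log (p n) :=
    mul_nonneg (hp n).le (neg_nonneg.2 (log_nonpos (hp n).le hp1))
  rw [norm_of_nonneg hent_nonneg]
  exact mul_neg_log_le_of_le_log_div_log (hr n) (hr1 n) (hp n) ht (by linarith) hlo.le hhi.le

end DecayRatio

theorem decay_ratio_eq_convergence_exponent_general (r p : ℕ → ℝ)
    (hr : ∀ n, 0 < r n) (hr1 : ∀ n, r n < 1) (hp : ∀ n, 0 < p n) (hpsum : HasSum p 1)
    (s : ℝ)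
    (hlim : Tendsto (fun n => Real.log (p n) / Real.log (r n)) atTop (nhds s))
    (hent : ¬ Summable (fun n => p n * (-Real.log (p n)))) :
    s ≤ sInf {t : ℝ | 0 ≤ t ∧ Summable (fun n => r n ^ t)} ∧
      s = sInf {t : ℝ | 0 ≤ t ∧ Summable (fun n => r n ^ t)} := by
  set S := {t : ℝ | 0 ≤ t ∧ Summable (fun n => r n ^ t)}
  have hs : 0 ≤ s := ge_of_tendsto' hlim fun n =>
    div_nonneg_of_nonpos (log_nonpos (hp n).le (le_hasSum hpsum n fun i _ => (hp i).le))
      (log_neg (hr n) (hr1 n)).le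
  have hIoi : Set.Ioi s ⊆ S := fun t hst =>
    ⟨hs.trans hst.le, summable_rpow_of_decayRatio_lt hr hr1 hp hlim hpsum.summable hst⟩
  have hle : s ≤ sInf S := le_csInf ⟨s + 1, hIoi (lt_add_one s)⟩ fun t ht =>
    decayRatio_le_of_summable_rpow hr hr1 hp hlim hent ht.1 ht.2
  have hge : sInf S ≤ s :=
    calc sInf S ≤ sInf (Set.Ioi s) := csInf_le_csInf ⟨0, fun t ht => ht.1⟩ Set.nonempty_Ioi hIoi
      _ = s := csInf_Ioi
  exact ⟨hle, hle.antisymm hge⟩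

theorem decay_ratio_eq_convergence_exponent (r p : ℕ → ℝ)
    (hr : ∀ n, 0 < r n) (hr1 : ∀ n, r n < 1) (hp : ∀ n, 0 < p n) (hpsum : HasSum p 1)
    (s : ℝ)
    (hlim : Tendsto (fun n => Real.log (p n) / Real.log (r n)) atTop (nhds s))
    (hr0 : Tendsto r atTop (nhds 0))
    (hent : ¬ Summable (fun n => p n * (-Real.log (p n)))) :
    s ≤ sInf {t : ℝ | 0 ≤ t ∧ Summable (fun n => r n ^ t)} ∧
      s = sInf {t : ℝ | 0 ≤ t ∧ Summable (fun n => r n ^ t)} :=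
  decay_ratio_eq_convergence_exponent_general r p hr hr1 hp hpsum s hlim hent
end

section
/- Let (X_k) be a sequence of positive reals, let S_n = X_1 + ⋯ + X_n and S'_n = S_n − max{X_1,…,X_n}, and let (b_n) be a sequence of positive reals such that S'_n/b_n → 1 as n → ∞ and limsup_{n→∞} S_n/b_n = ∞ (note that S'_n ≤ S_n for all n, and S_{j−1} ≤ S'_n whenever j ≤ n and X_j = max{X_1,…,X_n}). Then limsup_{n→∞} X_n / S_{n−1} = ∞. -/
open Filter

theorem trimmed_sum_max_dominates (X S S' b : ℕ → ℝ)
    (hX : ∀ k, 0 < X k) (hb : ∀ n, 0 < b n)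
    (hS : ∀ n, S n = ∑ k ∈ Finset.range n, X k)
    (hS' : ∀ n : ℕ, S' (n + 1) = S (n + 1) -
      (Finset.range (n + 1)).sup' Finset.nonempty_range_add_one X)
    (htrim : Tendsto (fun n => S' n / b n) atTop (nhds 1))
    (hlimsup : ∀ M : ℝ, ∃ᶠ n in atTop, M < S n / b n) :
    ∀ M : ℝ, ∃ᶠ n in atTop, M < X n / S n := by
  intro M
  have h2 : ∀ᶠ m in atTop, S' m / b m < 2 :=
    htrim.eventually_lt_const (by norm_num)
  obtain ⟨n₀, hn₀⟩ := eventually_atTop.1 h2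
  set c : ℝ := min (X 0) (X 1) with hc
  have hcpos : 0 < c := lt_min (hX 0) (hX 1)
  clear_value c
  rw [frequently_atTop]
  intro N
  set N' := max N 1 with hN'
  set K : ℝ := S N' with hK
  have hKpos : 0 < K := by
    rw [hK, hS]
    exact Finset.sum_pos (fun i _ => hX i) (Finset.nonempty_range_iff.2 (by omega))
  set C : ℝ := 2 * |M| + 3 + 2 * K / c with hCdef
  clear_value C
  obtain ⟨m, hm, hCm⟩ := frequently_atTop.1 (hlimsup C) (max n₀ 2)
  obtain ⟨n, rfl⟩ : ∃ n, m = n + 1 := ⟨m - 1, by omega⟩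
  have hn1 : 1 ≤ n := by omega
  obtain ⟨j, hjmem, hXj⟩ :=
    Finset.exists_mem_eq_sup' (Finset.nonempty_range_add_one (n := n)) X
  have hjn : j ≤ n := Nat.lt_succ_iff.mp (Finset.mem_range.1 hjmem)
  have hbpos := hb (n + 1)
  -- S'(n+1) = S(n+1) - X j
  have hSub : S' (n + 1) = S (n + 1) - X j := by rw [hS' n, hXj]
  have hS'lt : S' (n + 1) < 2 * b (n + 1) := by
    have := hn₀ (n + 1) (le_trans (le_max_left _ _) hm)
    rw [div_lt_iff₀ hbpos] at this
    linarith
  have hSgt : C * b (n + 1) < S (n + 1) := (lt_div_iff₀ hbpos).1 hCm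
  -- c ≤ S'(n+1)
  have hcS' : c ≤ S' (n + 1) := by
    set i : ℕ := if j = 0 then 1 else 0 with hi
    have hij : i ≠ j := by
      rw [hi]; split <;> omega
    have hin : i ∈ Finset.range (n + 1) := by
      rw [hi]; split <;> simp <;> omega
    have hpair : X i + X j ≤ S (n + 1) := by
      rw [hS]
      have hsub : ({i, j} : Finset ℕ) ⊆ Finset.range (n + 1) := by
        intro x hx
        simp at hx
        rcases hx with rfl | rfl
        · exact hin
        · exact hjmem
      calc X i + X j = ∑ k ∈ ({i, j} : Finset ℕ), X k := by
            rw [Finset.sum_pair hij]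
        _ ≤ ∑ k ∈ Finset.range (n + 1), X k :=
            Finset.sum_le_sum_of_subset_of_nonneg hsub (fun k _ _ => (hX k).le)
    have hci : c ≤ X i := by
      rw [hi, hc]; split
      · exact min_le_right _ _
      · exact min_le_left _ _
    rw [hSub]; linarith
  have hb' : c / 2 < b (n + 1) := by linarith
  have hC2pos : 0 < C - 2 := by
    have h0 : (0:ℝ) < 2 * |M| + 1 + 2 * K / c := by positivity
    rw [hCdef]; linarith
  have hXjbig : (C - 2) * b (n + 1) < X j := by nlinarith
  have hexp : (C - 2) * (c / 2) = (|M| + 1/2) * c + K := by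
    rw [hCdef]; field_simp; ring
  have hXjK : K < X j := by
    have h3 : (C - 2) * (c / 2) < (C - 2) * b (n + 1) :=
      mul_lt_mul_of_pos_left hb' hC2pos
    have hpos : 0 ≤ (|M| + 1/2) * c := by positivity
    linarith
  have hjN : N' ≤ j := by
    by_contra hlt
    push_neg at hlt
    have : X j ≤ K := by
      rw [hK, hS]
      exact Finset.single_le_sum (fun k _ => (hX k).le) (Finset.mem_range.2 hlt)
    linarith
  refine ⟨j, le_trans (le_max_left _ _) hjN, ?_⟩
  have hj1 : 1 ≤ j := le_trans (le_max_right _ _) hjN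
  have hSjpos : 0 < S j := by
    rw [hS]
    exact Finset.sum_pos (fun i _ => hX i) (Finset.nonempty_range_iff.2 (by omega))
  have hSjle : S j + X j ≤ S (n + 1) := by
    rw [hS, hS, ← Finset.sum_range_succ]
    exact Finset.sum_le_sum_of_subset_of_nonneg
      (Finset.range_subset_range.2 (by omega)) (fun k _ _ => (hX k).le)
  have hSjlt : S j < 2 * b (n + 1) := by
    rw [hSub] at hS'lt; linarith
  rw [lt_div_iff₀ hSjpos]
  have hMabs : M * S j ≤ |M| * S j :=
    mul_le_mul_of_nonneg_right (le_abs_self M) hSjpos.le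
  have h1 : |M| * S j < (|M| + 1/2) * (2 * b (n + 1)) := by
    nlinarith [abs_nonneg M]
  have h2' : (|M| + 1/2) * (2 * b (n + 1)) ≤ (C - 2) * b (n + 1) := by
    have hKc : 0 ≤ 2 * K / c := by positivity
    rw [hCdef]; nlinarith
  nlinarith [hMabs, h1, h2', hXjbig]
end

section
/- Let α > 1 and let (r_n), (p_n) be positive sequences such that for all sufficiently large k: r_k ≤ k^{−(α−δ)} and p_k ≥ k^{−(1+δ)}, where 0 < δ < min{1/3, (α−1)/(α+1)}. Then for every 0 < η < 1/2 there exists k_0 such that for all k ≥ k_0 and all n ∈ ℕ, (log ∑_{m=k}^{n+k} p_m) / (log ∑_{m=k−1}^{n+k+1} r_m) ≤ (1+δ)/(α−δ) + η. -/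
/-!
Put `β = 1 + δ` and `s = α - δ`; the hypothesis `δ < (α - 1) / (α + 1)` gives `β < s`.
With `x = min n k + 1` and `K = 2k`, keeping only the first `x` terms of the `p`-sum gives
`∑ p ≥ x K^(-β)`. For the `r`-sum, the tangent-line inequality for `y ↦ y^(1-s)` telescopes to the
tail bound `∑_{m > a} m^(-s) ≤ a^(1-s) / (s - 1)`, whence `∑ r ≤ C x K^(-s)`. Taking logarithms, the
ratio is at most `(β log K - log x) / (s log K - log x - log C)`, and since `0 ≤ log x ≤ log K` and
`β ≤ s` this is below `β / s + η` as soon as `η (s - 1) log K` dominates the constants.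
-/

open Filter Finset Real

theorem one_add_mul_one_sub_le_rpow_neg {u q : ℝ} (hu : 0 < u) (hq : 0 ≤ q) :
    1 + q * (1 - u) ≤ u ^ (-q) := by
  have hlog : q * (1 - u) ≤ log u * -q := by nlinarith [log_le_sub_one_of_pos hu]
  rw [rpow_def_of_pos hu]
  linarith [add_one_le_exp (log u * -q)]

theorem sub_one_mul_rpow_neg_le_rpow_sub_rpow {s y : ℝ} (hs : 1 ≤ s) (hy : 0 < y) :
    (s - 1) * (y + 1) ^ (-s) ≤ y ^ (1 - s) - (y + 1) ^ (1 - s) := by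
  have hy1 : 0 < y + 1 := by linarith
  have hu : 0 < y / (y + 1) := by positivity
  have tangent := one_add_mul_one_sub_le_rpow_neg hu (sub_nonneg.2 hs)
  rw [neg_sub, show 1 - y / (y + 1) = 1 / (y + 1) by field_simp; ring] at tangent
  have hsplit : y ^ (1 - s) = (y / (y + 1)) ^ (1 - s) * (y + 1) ^ (1 - s) := by
    rw [← mul_rpow hu.le hy1.le, div_mul_cancel₀ _ hy1.ne']
  have hshift : (y + 1) ^ (-s) = (y + 1) ^ (1 - s) / (y + 1) := by
    rw [← rpow_sub_one hy1.ne', sub_sub_cancel_left]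
  calc (s - 1) * (y + 1) ^ (-s)
      = (1 + (s - 1) * (1 / (y + 1))) * (y + 1) ^ (1 - s) - (y + 1) ^ (1 - s) := by
        rw [hshift]; ring
    _ ≤ y ^ (1 - s) - (y + 1) ^ (1 - s) := by rw [hsplit]; gcongr

theorem sum_Ioc_rpow_neg_le {s : ℝ} (hs : 1 < s) {a : ℕ} (ha : 0 < a) (b : ℕ) :
    ∑ m ∈ Ioc a b, (m : ℝ) ^ (-s) ≤ (a : ℝ) ^ (1 - s) / (s - 1) := by
  rw [le_div_iff₀ (by linarith)]
  rcases lt_or_ge b a with hba | hab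
  · rw [Ioc_eq_empty_of_le hba.le, sum_empty, zero_mul]
    positivity
  have telescope : (∑ m ∈ Ioc a b, (m : ℝ) ^ (-s)) * (s - 1) ≤
      (a : ℝ) ^ (1 - s) - (b : ℝ) ^ (1 - s) := by
    induction b, hab using Nat.le_induction with
    | base => simp
    | succ b hab ih =>
      have hb : (0 : ℝ) < b := by exact_mod_cast ha.trans_le hab
      have step := sub_one_mul_rpow_neg_le_rpow_sub_rpow hs.le hb
      rw [sum_Ioc_succ_top hab]
      push_cast
      linarith
  have : (0 : ℝ) ≤ (b : ℝ) ^ (1 - s) := by positivity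
  linarith

theorem sum_Icc_rpow_neg_le {s : ℝ} (hs : 1 < s) {a : ℕ} (ha : 0 < a) (n : ℕ) :
    ∑ m ∈ Icc a (a + n), (m : ℝ) ^ (-s) ≤ s / (s - 1) * (min n a + 1 : ℕ) * (a : ℝ) ^ (-s) := by
  have hs1 : 0 < s - 1 := by linarith
  have ha' : (0 : ℝ) < a := by exact_mod_cast ha
  rcases le_total n a with hna | han
  · have hterm : ∀ m ∈ Icc a (a + n), (m : ℝ) ^ (-s) ≤ (a : ℝ) ^ (-s) := fun m hm =>
      rpow_le_rpow_of_nonpos ha' (by exact_mod_cast (mem_Icc.1 hm).1) (by linarith)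
    have hC : 1 ≤ s / (s - 1) := by rw [le_div_iff₀ hs1]; linarith
    calc ∑ m ∈ Icc a (a + n), (m : ℝ) ^ (-s)
        ≤ ∑ _m ∈ Icc a (a + n), (a : ℝ) ^ (-s) := sum_le_sum hterm
      _ = (n + 1 : ℕ) * (a : ℝ) ^ (-s) := by
        rw [sum_const, Nat.card_Icc, nsmul_eq_mul, show a + n + 1 - a = n + 1 by omega]
      _ ≤ s / (s - 1) * (min n a + 1 : ℕ) * (a : ℝ) ^ (-s) := by
        rw [min_eq_left hna]
        gcongr
        exact le_mul_of_one_le_left (by positivity) hC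
  · have htail := sum_Ioc_rpow_neg_le hs ha (a + n)
    rw [sub_eq_neg_add, rpow_add_one ha'.ne'] at htail
    rw [← sum_Ioc_add_eq_sum_Icc (by omega), min_eq_right han]
    calc ∑ m ∈ Ioc a (a + n), (m : ℝ) ^ (-s) + (a : ℝ) ^ (-s)
        ≤ (1 + a / (s - 1)) * (a : ℝ) ^ (-s) := by
          rw [add_mul, one_mul, div_mul_eq_mul_div, mul_comm (a : ℝ)]
          linarith
      _ ≤ s / (s - 1) * (a + 1 : ℕ) * (a : ℝ) ^ (-s) := by
          gcongr
          rw [div_mul_eq_mul_div, ← sub_nonneg]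
          field_simp
          push_cast
          nlinarith

theorem min_add_one_mul_rpow_neg_le_sum_Icc {β : ℝ} (hβ : 0 ≤ β) {f : ℕ → ℝ} {a : ℕ}
    (ha : 0 < a) (hf : ∀ m ≥ a, (m : ℝ) ^ (-β) ≤ f m) (n : ℕ) :
    (min n a + 1 : ℕ) * ((2 * a : ℕ) : ℝ) ^ (-β) ≤ ∑ m ∈ Icc a (n + a), f m := by
  have hpos : ∀ m ∈ Icc a (n + a), 0 ≤ f m := fun m hm =>
    (rpow_nonneg (Nat.cast_nonneg m) _).trans (hf m (mem_Icc.1 hm).1)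
  have hterm : ∀ m ∈ Icc a (min n a + a), ((2 * a : ℕ) : ℝ) ^ (-β) ≤ f m := by
    intro m hm
    obtain ⟨ham, hma⟩ := mem_Icc.1 hm
    refine le_trans ?_ (hf m ham)
    exact rpow_le_rpow_of_nonpos (by exact_mod_cast ha.trans_le ham)
      (by exact_mod_cast (by omega : m ≤ 2 * a)) (by linarith)
  calc (min n a + 1 : ℕ) * ((2 * a : ℕ) : ℝ) ^ (-β)
      = ∑ _m ∈ Icc a (min n a + a), ((2 * a : ℕ) : ℝ) ^ (-β) := by
        rw [sum_const, Nat.card_Icc, nsmul_eq_mul,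
          show min n a + a + 1 - a = min n a + 1 by omega]
    _ ≤ ∑ m ∈ Icc a (min n a + a), f m := sum_le_sum hterm
    _ ≤ ∑ m ∈ Icc a (n + a), f m :=
        sum_le_sum_of_subset_of_nonneg (Icc_subset_Icc le_rfl (by omega))
          (fun m hm _ => hpos m hm)

theorem rpow_neg_le_of_div_le {s x y c : ℝ} (hs : 0 ≤ s) (hy : 0 < y) (hc : 0 < c)
    (h : y / c ≤ x) : x ^ (-s) ≤ c ^ s * y ^ (-s) :=
  calc x ^ (-s) ≤ (y / c) ^ (-s) := rpow_le_rpow_of_nonpos (by positivity) h (by linarith)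
    _ = c ^ s * y ^ (-s) := by
      rw [div_rpow hy.le hc.le, rpow_neg hc.le, div_inv_eq_mul, mul_comm]

theorem sum_Icc_sub_one_le_min_add_one_mul_rpow_neg {s : ℝ} (hs : 1 < s) {f : ℕ → ℝ}
    {k : ℕ} (hk : 2 ≤ k) (hf : ∀ m ≥ k - 1, f m ≤ (m : ℝ) ^ (-s)) (n : ℕ) :
    ∑ m ∈ Icc (k - 1) (n + k + 1), f m ≤
      s / (s - 1) * 3 * 4 ^ s * (min n k + 1 : ℕ) * ((2 * k : ℕ) : ℝ) ^ (-s) := by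
  have hs1 : 0 < s - 1 := by linarith
  calc ∑ m ∈ Icc (k - 1) (n + k + 1), f m
      ≤ ∑ m ∈ Icc (k - 1) (k - 1 + (n + 2)), (m : ℝ) ^ (-s) := by
        rw [show n + k + 1 = k - 1 + (n + 2) by omega]
        exact sum_le_sum fun m hm => hf m (mem_Icc.1 hm).1
    _ ≤ s / (s - 1) * (min (n + 2) (k - 1) + 1 : ℕ) * ((k - 1 : ℕ) : ℝ) ^ (-s) :=
        sum_Icc_rpow_neg_le hs (by omega) _
    _ ≤ s / (s - 1) * (3 * (min n k + 1 : ℕ)) * (4 ^ s * ((2 * k : ℕ) : ℝ) ^ (-s)) := by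
        gcongr
        · norm_cast; omega
        · refine rpow_neg_le_of_div_le (by linarith) (by norm_cast; omega) four_pos ?_
          rw [Nat.cast_sub (by omega)]
          push_cast
          linarith [(Nat.ofNat_le_cast.2 hk : (2 : ℝ) ≤ k)]
    _ = _ := by ring

theorem eventually_log_div_log_le {β s η C : ℝ} (hβ : 0 ≤ β) (hβs : β ≤ s) (hs : 1 < s)
    (hη : 0 < η) (hC : 0 < C) :
    ∀ᶠ K : ℝ in atTop, ∀ x A B : ℝ, 1 ≤ x → x ≤ K → x * K ^ (-β) ≤ A → 0 < B →
      B ≤ C * x * K ^ (-s) → log A / log B ≤ β / s + η := by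
  set t := β / s + η
  have hs0 : 0 < s := by linarith
  have ht : 0 ≤ t := by positivity
  have hts : t * s = β + η * s := by simp only [t, add_mul, div_mul_cancel₀ _ hs0.ne']
  have ht1 : t - 1 ≤ η := by have := div_le_one_of_le₀ hβs hs0.le; linarith
  have hlogK := tendsto_log_atTop.const_mul_atTop (mul_pos hη (sub_pos.2 hs))
  filter_upwards [hlogK.eventually_gt_atTop (max (t * log C) (η * log C)), eventually_gt_atTop 0]
    with K hK hK0 x A B hx1 hxK hA hB0 hB
  obtain ⟨hKt, hKη⟩ := max_lt_iff.1 hK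
  have hx0 : 0 < x := by linarith
  have hlogx : 0 ≤ log x := log_nonneg hx1
  have hlogA : log x - β * log K ≤ log A := by
    have := log_le_log (by positivity) hA
    rwa [log_mul hx0.ne' (by positivity), log_rpow hK0, neg_mul, ← sub_eq_add_neg] at this
  have hlogB : log B ≤ log C + log x - s * log K := by
    have := log_le_log hB0 hB
    rwa [log_mul (by positivity) (by positivity), log_mul hC.ne' hx0.ne', log_rpow hK0,
      neg_mul, ← sub_eq_add_neg] at this
  have hlogB_neg : log B < 0 := by
    have : log C < (s - 1) * log K := lt_of_mul_lt_mul_left (by linarith) hη.le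
    linarith [log_le_log hx0 hxK]
  have hsmall : (t - 1) * log x ≤ η * log K :=
    (mul_le_mul_of_nonneg_right ht1 hlogx).trans
      (mul_le_mul_of_nonneg_left (log_le_log hx0 hxK) hη.le)
  rw [div_le_iff_of_neg hlogB_neg]
  calc t * log B ≤ t * (log C + log x - s * log K) := mul_le_mul_of_nonneg_left hlogB ht
    _ = t * log C + (t - 1) * log x + log x - (t * s) * log K := by ring
    _ ≤ log x - β * log K := by rw [hts]; linarith
    _ ≤ log A := hlogA

theorem packing_cover_log_ratio_general (α δ : ℝ) (hα : 1 < α)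
    (hδ0 : 0 < δ) (hδ : δ < min (1 / 3) ((α - 1) / (α + 1)))
    (r p : ℕ → ℝ) (hr : ∀ k, 0 < r k)
    (hrup : ∀ᶠ k : ℕ in atTop, r k ≤ (k : ℝ) ^ (-(α - δ)))
    (hplow : ∀ᶠ k : ℕ in atTop, p k ≥ (k : ℝ) ^ (-(1 + δ))) :
    ∀ η : ℝ, 0 < η → η < 1 / 2 → ∃ k₀ : ℕ, ∀ k ≥ k₀, ∀ n : ℕ,
      Real.log (∑ m ∈ Finset.Icc k (n + k), p m) /
        Real.log (∑ m ∈ Finset.Icc (k - 1) (n + k + 1), r m) ≤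
      (1 + δ) / (α - δ) + η := by
  intro η hη _
  have hβs : 1 + δ ≤ α - δ := by
    have := (lt_div_iff₀ (by linarith)).1 (hδ.trans_le (min_le_right _ _))
    nlinarith
  have hs : 1 < α - δ := by linarith
  obtain ⟨N₁, hN₁⟩ := eventually_atTop.1 hrup
  obtain ⟨N₂, hN₂⟩ := eventually_atTop.1 hplow
  have h2k : Tendsto (fun k : ℕ => ((2 * k : ℕ) : ℝ)) atTop atTop :=
    tendsto_natCast_atTop_atTop.comp (tendsto_id.const_mul_atTop' two_pos)
  have hK := h2k.eventually (eventually_log_div_log_le (by linarith) hβs hs hη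
      (C := (α - δ) / (α - δ - 1) * 3 * 4 ^ (α - δ)) (by positivity))
  obtain ⟨k₀, hk₀⟩ := eventually_atTop.1 (hK.and (eventually_ge_atTop (N₁ + N₂ + 2)))
  refine ⟨k₀, fun k hk n => ?_⟩
  obtain ⟨hlog, hkN⟩ := hk₀ k hk
  exact hlog _ _ _ (by norm_cast; omega) (by norm_cast; omega)
    (min_add_one_mul_rpow_neg_le_sum_Icc (by linarith) (by omega)
      (fun m hm => hN₂ m (by omega)) n)
    (sum_pos (fun m _ => hr m) ⟨k, mem_Icc.2 ⟨by omega, by omega⟩⟩)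
    (sum_Icc_sub_one_le_min_add_one_mul_rpow_neg hs (by omega)
      (fun m hm => hN₁ m (by omega)) n)

theorem packing_cover_log_ratio (α δ : ℝ) (hα : 1 < α)
    (hδ0 : 0 < δ) (hδ : δ < min (1 / 3) ((α - 1) / (α + 1)))
    (r p : ℕ → ℝ) (hr : ∀ k, 0 < r k) (hp : ∀ k, 0 < p k)
    (hrup : ∀ᶠ k : ℕ in atTop, r k ≤ (k : ℝ) ^ (-(α - δ)))
    (hplow : ∀ᶠ k : ℕ in atTop, p k ≥ (k : ℝ) ^ (-(1 + δ))) :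
    ∀ η : ℝ, 0 < η → η < 1 / 2 → ∃ k₀ : ℕ, ∀ k ≥ k₀, ∀ n : ℕ,
      Real.log (∑ m ∈ Finset.Icc k (n + k), p m) /
        Real.log (∑ m ∈ Finset.Icc (k - 1) (n + k + 1), r m) ≤
      (1 + δ) / (α - δ) + η :=
  packing_cover_log_ratio_general α δ hα hδ0 hδ r p hr hrup hplow
end

section
/- Let x have digit sequence (a_i) ∈ ℕ^ℕ with empirical digit frequencies f_{n,k}/n → p_k for each fixed k (where p_k > 0, ∑ p_k = 1). Let (q_k), (r_k) be positive sequences with q_k, r_k < 1, such that lim_{k→∞} (log q_k)/(log r_k) = s ∈ (0, ∞) and ∑_k p_k (−log r_k) = ∞. Then lim_{n→∞} (∑_{i=1}^n log q_{a_i}) / (∑_{i=1}^n log r_{a_i}) = s. -/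
/-!
Write `log q_k - s log r_k = e_k log r_k` with `e_k → 0`. For `ε > 0`, digits beyond some
threshold contribute at most `ε` times the Birkhoff sum of `-log r`, while the finitely many
digits below it contribute at most a constant per step, i.e. `O(n)` in total. Because the digit
frequencies converge to `p_k` and `∑ p_k (-log r_k) = ∞`, the Birkhoff sum of `-log r` grows
superlinearly, so the `O(n)` error is negligible after dividing by it.
-/

open Filter Topology Finset

section BirkhoffSums

variable {a : ℕ → ℕ}

theorem sum_card_fiber_mul_le_sum (I S : Finset ℕ) {w : ℕ → ℝ} (hw : ∀ i ∈ I, 0 ≤ w (a i)) :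
    ∑ k ∈ S, (#{i ∈ I | a i = k} : ℝ) * w k ≤ ∑ i ∈ I, w (a i) :=
  calc ∑ k ∈ S, (#{i ∈ I | a i = k} : ℝ) * w k
      = ∑ k ∈ S, ∑ i ∈ I with a i = k, w (a i) := by
        refine sum_congr rfl fun k _ => ?_
        rw [sum_congr rfl fun i hi => by rw [(mem_filter.1 hi).2], sum_const, nsmul_eq_mul]
    _ = ∑ i ∈ I with a i ∈ S, w (a i) := sum_fiberwise_eq_sum_filter _ _ _ _
    _ ≤ ∑ i ∈ I, w (a i) :=
        sum_le_sum_of_subset_of_nonneg (filter_subset _ _) fun i hi _ => hw i hi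

theorem tendsto_sum_Icc_div_atTop_of_not_summable {p w : ℕ → ℝ} (ha : ∀ i, 1 ≤ a i)
    (hp : ∀ k, 1 ≤ k → 0 ≤ p k) (hw : ∀ k, 1 ≤ k → 0 ≤ w k)
    (hfreq : ∀ k, 1 ≤ k →
      Tendsto (fun n : ℕ => (#{i ∈ Icc 1 n | a i = k} : ℝ) / n) atTop (𝓝 (p k)))
    (hdiv : ¬ Summable fun k => p (k + 1) * w (k + 1)) :
    Tendsto (fun n : ℕ => (∑ i ∈ Icc 1 n, w (a i)) / n) atTop atTop := by
  have hpartial : Tendsto (fun K => ∑ k ∈ Icc 1 K, p k * w k) atTop atTop := by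
    have hshifted := (not_summable_iff_tendsto_nat_atTop_of_nonneg fun k =>
      mul_nonneg (hp _ k.succ_pos) (hw _ k.succ_pos)).1 hdiv
    refine hshifted.congr fun K => ?_
    rw [← Ico_add_one_right_eq_Icc, sum_Ico_eq_sum_range, add_tsub_cancel_right]
    simp only [add_comm 1]
  refine tendsto_atTop.2 fun b => ?_
  obtain ⟨K, hK⟩ := (hpartial.eventually_gt_atTop b).exists
  have hlim : Tendsto (fun n : ℕ => ∑ k ∈ Icc 1 K, (#{i ∈ Icc 1 n | a i = k} : ℝ) / n * w k)
      atTop (𝓝 (∑ k ∈ Icc 1 K, p k * w k)) :=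
    tendsto_finsetSum _ fun k hk => (hfreq k (mem_Icc.1 hk).1).mul_const _
  filter_upwards [hlim.eventually (eventually_gt_nhds hK)] with n hn
  refine hn.le.trans ?_
  simp only [div_mul_eq_mul_div, ← sum_div]
  exact div_le_div_of_nonneg_right
    (sum_card_fiber_mul_le_sum _ _ fun i _ => hw _ (ha i)) n.cast_nonneg

theorem exists_abs_sub_mul_le_add_mul {f g : ℕ → ℝ} {s ε : ℝ} (hg : ∀ k, 1 ≤ k → 0 < g k)
    (hfg : Tendsto (fun k => f k / g k) atTop (𝓝 s)) (hε : 0 < ε) :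
    ∃ C, ∀ k, 1 ≤ k → |f k - s * g k| ≤ C + ε * g k := by
  obtain ⟨K, hK⟩ := Metric.tendsto_atTop.1 hfg ε hε
  refine ⟨∑ j ∈ range K, |f j - s * g j|, fun k hk => ?_⟩
  have hgk := hg k hk
  rcases lt_or_ge k K with hkK | hkK
  · have hle := single_le_sum (f := fun j => |f j - s * g j|) (fun j _ => abs_nonneg _)
      (mem_range.2 hkK)
    linarith [mul_pos hε hgk]
  · have hdist : |f k / g k - s| < ε := hK k hkK
    have hfactor : |f k - s * g k| = |f k / g k - s| * g k := by
      rw [← abs_of_pos hgk, ← abs_mul, abs_of_pos hgk, sub_mul, div_mul_cancel₀ _ hgk.ne']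
    have hC0 := sum_nonneg fun j (_ : j ∈ range K) => abs_nonneg (f j - s * g j)
    linarith [mul_le_mul_of_nonneg_right hdist.le hgk.le]

theorem tendsto_sum_Icc_div_sum_Icc {f g : ℕ → ℝ} {s : ℝ} (ha : ∀ i, 1 ≤ a i)
    (hg : ∀ k, 1 ≤ k → 0 < g k) (hfg : Tendsto (fun k => f k / g k) atTop (𝓝 s))
    (hgrowth : Tendsto (fun n : ℕ => (∑ i ∈ Icc 1 n, g (a i)) / n) atTop atTop) :
    Tendsto (fun n => (∑ i ∈ Icc 1 n, f (a i)) / ∑ i ∈ Icc 1 n, g (a i)) atTop (𝓝 s) := by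
  refine Metric.tendsto_nhds.2 fun ε hε => ?_
  obtain ⟨C, hC⟩ := exists_abs_sub_mul_le_add_mul hg hfg (half_pos hε)
  have hsmall : Tendsto (fun n : ℕ => C * (n / ∑ i ∈ Icc 1 n, g (a i))) atTop (𝓝 0) := by
    simpa only [Pi.inv_apply, inv_div, mul_zero] using hgrowth.inv_tendsto_atTop.const_mul C
  filter_upwards [hsmall.eventually (eventually_lt_nhds (half_pos hε)),
    hgrowth.eventually_gt_atTop 0, eventually_gt_atTop 0] with n hCn hgn hn
  set G := ∑ i ∈ Icc 1 n, g (a i)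
  have hG : 0 < G := (div_pos_iff_of_pos_right (Nat.cast_pos.2 hn)).1 hgn
  have hsum : |∑ i ∈ Icc 1 n, f (a i) - s * G| ≤ n * C + ε / 2 * G :=
    calc |∑ i ∈ Icc 1 n, f (a i) - s * G| = |∑ i ∈ Icc 1 n, (f (a i) - s * g (a i))| := by
          rw [sum_sub_distrib, mul_sum]
      _ ≤ ∑ i ∈ Icc 1 n, (C + ε / 2 * g (a i)) :=
          (abs_sum_le_sum_abs _ _).trans (sum_le_sum fun i _ => hC _ (ha i))
      _ = n * C + ε / 2 * G := by
          rw [sum_add_distrib, sum_const, Nat.card_Icc, add_tsub_cancel_right, nsmul_eq_mul,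
            ← mul_sum]
  rw [Real.dist_eq, div_sub' hG.ne', abs_div, abs_of_pos hG, div_lt_iff₀ hG, mul_comm G s]
  have hnC : n * C = C * (n / G) * G := by field_simp
  linarith [mul_lt_mul_of_pos_right hCn hG]

end BirkhoffSums

theorem birkhoff_ratio_tendsto_decay_ratio_general (a : ℕ → ℕ) (ha : ∀ i, 1 ≤ a i)
    (p : ℕ → ℝ) (hp : ∀ k, 1 ≤ k → 0 < p k)
    (hfreq : ∀ k, 1 ≤ k →
      Tendsto (fun n : ℕ =>
          (((Finset.Icc 1 n).filter (fun i => a i = k)).card : ℝ) / (n : ℝ))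
        atTop (nhds (p k)))
    (q r : ℕ → ℝ)
    (hr : ∀ k, 1 ≤ k → 0 < r k ∧ r k < 1)
    (s : ℝ)
    (hratio : Tendsto (fun k => Real.log (q k) / Real.log (r k)) atTop (nhds s))
    (hdiv : ¬ Summable (fun k => p (k + 1) * (-Real.log (r (k + 1))))) :
    Tendsto (fun n : ℕ =>
        (∑ i ∈ Finset.Icc 1 n, Real.log (q (a i))) /
        (∑ i ∈ Finset.Icc 1 n, Real.log (r (a i))))
      atTop (nhds s) := by
  have hlogr : ∀ k, 1 ≤ k → 0 < -Real.log (r k) := fun k hk =>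
    neg_pos.2 (Real.log_neg (hr k hk).1 (hr k hk).2)
  have hgrowth := tendsto_sum_Icc_div_atTop_of_not_summable ha (fun k hk => (hp k hk).le)
    (fun k hk => (hlogr k hk).le) hfreq hdiv
  have hratio' : Tendsto (fun k => -Real.log (q k) / -Real.log (r k)) atTop (𝓝 s) := by
    simpa only [neg_div_neg_eq] using hratio
  simpa only [sum_neg_distrib, neg_div_neg_eq] using
    tendsto_sum_Icc_div_sum_Icc ha hlogr hratio' hgrowth

theorem birkhoff_ratio_tendsto_decay_ratio (a : ℕ → ℕ) (ha : ∀ i, 1 ≤ a i)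
    (p : ℕ → ℝ) (hp : ∀ k, 1 ≤ k → 0 < p k) (hpsum : HasSum (fun k => p (k + 1)) 1)
    (hfreq : ∀ k, 1 ≤ k →
      Tendsto (fun n : ℕ =>
          (((Finset.Icc 1 n).filter (fun i => a i = k)).card : ℝ) / (n : ℝ))
        atTop (nhds (p k)))
    (q r : ℕ → ℝ) (hq : ∀ k, 1 ≤ k → 0 < q k ∧ q k < 1)
    (hr : ∀ k, 1 ≤ k → 0 < r k ∧ r k < 1)
    (s : ℝ) (hs : 0 < s)
    (hratio : Tendsto (fun k => Real.log (q k) / Real.log (r k)) atTop (nhds s))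
    (hdiv : ¬ Summable (fun k => p (k + 1) * (-Real.log (r (k + 1))))) :
    Tendsto (fun n : ℕ =>
        (∑ i ∈ Finset.Icc 1 n, Real.log (q (a i))) /
        (∑ i ∈ Finset.Icc 1 n, Real.log (r (a i))))
      atTop (nhds s) :=
  birkhoff_ratio_tendsto_decay_ratio_general a ha p hp hfreq q r hr s hratio hdiv
end
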